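/- No finite Stewart word contains a cube: there do not exist a finite word t over A, an index i ≥ 0, and an integer p ≥ 1 with i + 3p ≤ 3^{|t|} such that T(t)[i+j] = T(t)[i+j+p] for all 0 ≤ j < 2p. Consequently, no infinite Stewart word T(𝐭) contains a factor of the form www with w nonempty. -/

import Mathlib

/-- The alphabet B = {0, 1, ?}. -/
inductive B : Type
  | b0 : B
  | b1 : B
  | bq : B
deriving DecidableEq, Inhabited, Repr

/-- The six Stewart patterns a = 01?, b = 10?, c = 0?1, d = 1?0, e = ?01, f = ?10. -/
inductive A : Type
  | a : A
  | b : A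
  | c : A
  | d : A
  | e : A
  | f : A
deriving DecidableEq, Inhabited, Repr

open B in
/-- The length-3 word over B associated with a Stewart pattern. -/
def pat : A → List B
  | .a => [b0, b1, bq]
  | .b => [b1, b0, bq]
  | .c => [b0, bq, b1]
  | .d => [b1, bq, b0]
  | .e => [bq, b0, b1]
  | .f => [bq, b1, b0]

/-- Replace the occurrences of `?` in the first word, in order,
by the symbols of the second word. -/
def fill : List B → List B → List B
  | [], _ => []
  | B.bq :: rest, s :: ss => s :: fill rest ss
  | B.bq :: rest, [] => B.bq :: fill rest []
  | x :: rest, ss => x :: fill rest ss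

/-- Helper: the finite Stewart word of the *reverse* of `t`. -/
def Trev : List A → List B
  | [] => [B.bq]
  | g :: t => fill (Trev t ++ Trev t ++ Trev t) (pat g)

/-- The finite Stewart word `T(t)`, of length `3 ^ t.length`:
`T(ε) = ?`, and `T(t g)` is obtained from `T(t)T(t)T(t)` by replacing its
three occurrences of `?`, in order, by the three symbols of the pattern `g`. -/
def stewT (t : List A) : List B := Trev t.reverse

/-- The length-`r` prefix of an infinite sequence of Stewart patterns, as a list. -/
def prefT (t : ℕ → A) (r : ℕ) : List A := List.ofFn (fun i : Fin r => t i)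

/-- The infinite Stewart word `T(𝐭)`: its symbol at position `n` is the eventual
value of `T(t_0 ⋯ t_{r-1})[n]` as `r → ∞`. -/
noncomputable def stewInf (t : ℕ → A) (n : ℕ) : B :=
  Classical.epsilon (fun v : B => ∃ R : ℕ, ∀ r ≥ R, (stewT (prefT t r)).getD n B.bq = v)

/-- `w` occurs as a factor of the infinite word `x`. -/
def FactorOf (w : List B) (x : ℕ → B) : Prop :=
  ∃ i : ℕ, ∀ j : ℕ, j < w.length → w.getD j B.bq = x (i + j)

/-- `w` has period `p ≥ 1`: `w[i] = w[i+p]` for all `0 ≤ i < |w| - p`. -/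
def HasPeriod (w : List B) (p : ℕ) : Prop :=
  1 ≤ p ∧ ∀ i : ℕ, i + p < w.length → w.getD i B.bq = w.getD (i + p) B.bq

/-- The least period `per(w)` of a word. -/
noncomputable def leastPeriod (w : List B) : ℕ := sInf {p | HasPeriod w p}

/-- The exponent `exp(w) = |w| / per(w)` of a word. -/
noncomputable def expo (w : List B) : ℝ := (w.length : ℝ) / (leastPeriod w : ℝ)

/-- The Hamming distance between two Stewart patterns: the number of positions
`p ∈ {0,1,2}` at which the length-3 words differ. -/
def ham (g h : A) : ℕ :=
  (Finset.univ.filter fun p : Fin 3 => (pat g).getD p B.bq ≠ (pat h).getD p B.bq).card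

/-- `t` is ultimately periodic. -/
def UltPeriodic (t : ℕ → A) : Prop :=
  ∃ N : ℕ, ∃ p : ℕ, 1 ≤ p ∧ ∀ n ≥ N, t (n + p) = t n

/-- An infinite word `x` is 3-automatic: there is a finite automaton with output,
reading base-3 representations least-significant-digit first (trailing zeros
allowed), computing `x`. -/
def IsThreeAutomatic (x : ℕ → B) : Prop :=
  ∃ (Q : Type) (_ : Finite Q) (δ : Q → Fin 3 → Q) (q0 : Q) (τ : Q → B),
    ∀ (r : ℕ) (e : Fin r → Fin 3),
      τ (List.foldl δ q0 (List.ofFn fun i => e i)) =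
        x (∑ i : Fin r, (e i).val * 3 ^ (i : ℕ))

/-! ### Auxiliary development -/

/-- The 3-uniform "morphism" associated with a pattern: `pat g` with its `?` replaced by `x`. -/
def sig (g : A) (x : B) : List B := fill (pat g) [x]

/-- Position of `?` in `pat g`. -/
def qpos : A → ℕ
  | .a => 2
  | .b => 2
  | .c => 1
  | .d => 1
  | .e => 0
  | .f => 0

lemma qpos_lt (g : A) : qpos g < 3 := by cases g <;> simp [qpos]

lemma sig_length (g : A) (x : B) : (sig g x).length = 3 := by
  cases g <;> cases x <;> rfl

lemma sig_getD_q (g : A) (x : B) : (sig g x).getD (qpos g) B.bq = x := by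
  cases g <;> cases x <;> rfl

lemma sig_getD_ne (g : A) (x : B) (m : ℕ) (h1 : m < 3) (h2 : m ≠ qpos g) :
    (sig g x).getD m B.bq = (pat g).getD m B.bq := by
  interval_cases m <;> cases g <;> cases x <;> simp_all [sig, pat, fill, qpos]

lemma pat_ne (g : A) (γ δ : ℕ) (hγ : γ < 3) (hδ : δ < 3) (h1 : γ ≠ qpos g)
    (h2 : δ ≠ qpos g) (h3 : γ ≠ δ) :
    (pat g).getD γ B.bq ≠ (pat g).getD δ B.bq := by
  interval_cases γ <;> interval_cases δ <;> cases g <;> simp_all [pat, qpos]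

lemma fill_bind (g : A) (w : List B) : ∀ u : List B,
    fill (w.flatMap (sig g)) u = (fill w u).flatMap (sig g) := by
  induction w with
  | nil => intro u; rfl
  | cons x w ih =>
      intro u
      cases x <;> cases u <;> cases g <;>
        simp only [sig, pat, fill, List.flatMap_cons, List.flatMap_nil,
          List.cons_append, List.nil_append, List.append_nil, ← List.flatMap_def, List.append_eq, ih]

lemma Trev_append (g : A) : ∀ s : List A,
    Trev (s ++ [g]) = (Trev s).flatMap (sig g) := by
  intro s
  induction s with
  | nil => cases g <;> rfl
  | cons h s ih =>
      show Trev (h :: (s ++ [g])) = _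
      rw [Trev, ih, Trev]
      rw [← List.flatMap_append, ← List.flatMap_append, fill_bind]

lemma stewT_cons (g : A) (t : List A) :
    stewT (g :: t) = (stewT t).flatMap (sig g) := by
  show Trev ((g :: t).reverse) = _
  rw [List.reverse_cons, Trev_append]
  rfl

lemma stewT_length (t : List A) : (stewT t).length = 3 ^ t.length := by
  induction t with
  | nil => rfl
  | cons g t ih =>
      rw [stewT_cons, List.length_flatMap]
      have : List.map (List.length ∘ sig g) (stewT t) = List.map (fun _ => 3) (stewT t) := by
        apply List.map_congr_left
        intro x _
        simp [Function.comp, sig_length]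
      rw [show (fun a => (sig g a).length) = List.length ∘ sig g from rfl, this, List.map_const', List.sum_replicate, smul_eq_mul, ih,
        List.length_cons, pow_succ]

lemma bind_getD (g : A) (u : List B) : ∀ n : ℕ, n < 3 * u.length →
    (u.flatMap (sig g)).getD n B.bq = (sig g (u.getD (n / 3) B.bq)).getD (n % 3) B.bq := by
  induction u with
  | nil => intro n hn; simp at hn
  | cons x u ih =>
      intro n hn
      rw [List.flatMap_cons]
      by_cases h3 : n < 3
      · rw [List.getD_append _ _ _ _ (by rw [sig_length]; exact h3)]
        have h1 : n / 3 = 0 := by omega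
        have h2 : n % 3 = n := by omega
        rw [h1, h2]
        rfl
      · rw [List.getD_append_right _ _ _ _ (by rw [sig_length]; omega)]
        rw [sig_length]
        have hlen : n - 3 < 3 * u.length := by
          simp only [List.length_cons] at hn; omega
        rw [ih (n - 3) hlen]
        obtain ⟨k, hk⟩ : ∃ k, n / 3 = k + 1 := ⟨n / 3 - 1, by omega⟩
        have h1 : (n - 3) / 3 = k := by omega
        have h2 : (n - 3) % 3 = n % 3 := by omega
        rw [h1, h2, hk, List.getD_cons_succ]


theorem cubefree : ∀ (t : List A) (i p : ℕ), 1 ≤ p → i + 3 * p ≤ 3 ^ t.length →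
    ¬ (∀ j < 2 * p, (stewT t).getD (i + j) B.bq = (stewT t).getD (i + j + p) B.bq) := by
  intro t
  induction t with
  | nil =>
      intro i p hp hle _
      simp only [List.length_nil, pow_zero] at hle
      omega
  | cons g t ih =>
      intro i p hp hle hcube
      set u := stewT t with hu
      have hul : u.length = 3 ^ t.length := stewT_length t
      have hW : ∀ n, n < 3 * u.length →
          (stewT (g :: t)).getD n B.bq = (sig g (u.getD (n / 3) B.bq)).getD (n % 3) B.bq := by
        intro n hn
        rw [stewT_cons]
        exact bind_getD g u n hn
      have hle3 : i + 3 * p ≤ 3 * u.length := by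
        rw [hul]
        simpa [List.length_cons, pow_succ, mul_comm] using hle
      by_cases hp3 : p % 3 = 0
      · -- p divisible by 3; reduce to a cube in u
        obtain ⟨p', hp'⟩ : ∃ p', p = 3 * p' := ⟨p / 3, by omega⟩
        have hp'1 : 1 ≤ p' := by omega
        have hq3 := qpos_lt g
        set q := qpos g with hqdef
        set i' := (i + 2 - q) / 3 with hi'
        have hqi : i ≤ 3 * i' + q ∧ 3 * i' + q ≤ i + 2 := by constructor <;> omega
        refine ih i' p' hp'1 (by omega) ?_
        intro j' hj'
        have hn1 : 3 * (i' + j') + q < 3 * u.length := by omega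
        have hn2 : 3 * (i' + j' + p') + q < 3 * u.length := by omega
        have key := hcube (3 * (i' + j') + q - i) (by omega)
        have e1 : i + (3 * (i' + j') + q - i) = 3 * (i' + j') + q := by omega
        have e2 : 3 * (i' + j') + q + p = 3 * (i' + j' + p') + q := by omega
        rw [e1, e2, hW _ hn1, hW _ hn2] at key
        have d1 : (3 * (i' + j') + q) / 3 = i' + j' := by omega
        have d2 : (3 * (i' + j') + q) % 3 = q := by omega
        have d3 : (3 * (i' + j' + p') + q) / 3 = i' + j' + p' := by omega
        have d4 : (3 * (i' + j' + p') + q) % 3 = q := by omega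
        rw [d1, d2, d3, d4, sig_getD_q, sig_getD_q] at key
        exact key
      · -- p not divisible by 3: direct contradiction
        have hq3 := qpos_lt g
        set q := qpos g with hqdef
        obtain ⟨γ, δ, hγ3, hδ3, hγq, hδq, hγδ, hsum⟩ :
            ∃ γ δ, γ < 3 ∧ δ < 3 ∧ γ ≠ q ∧ δ ≠ q ∧ γ ≠ δ ∧ (γ + p) % 3 = δ := by
          by_cases hc : ((q + 1) % 3 + p) % 3 = (q + 2) % 3
          · exact ⟨(q + 1) % 3, (q + 2) % 3, by omega, by omega, by omega, by omega,
              by omega, hc⟩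
          · exact ⟨(q + 2) % 3, (q + 1) % 3, by omega, by omega, by omega, by omega,
              by omega, by omega⟩
        have hWval : ∀ n, i ≤ n → n < i + 3 * p → n % 3 ≠ q →
            (stewT (g :: t)).getD n B.bq = (pat g).getD (n % 3) B.bq := by
          intro n h1 h2 h3
          rw [hW n (by omega)]
          exact sig_getD_ne g _ _ (by omega) h3
        rcases Nat.lt_or_ge p 2 with hp2 | hp2
        · -- p = 1
          have hp1 : p = 1 := by omega
          subst hp1
          have e0 := hcube 0 (by omega)
          have e1 := hcube 1 (by omega)
          -- W[i] = W[i+1] = W[i+2]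
          have chain : ∀ j1, j1 < 3 → (stewT (g :: t)).getD (i + j1) B.bq
              = (stewT (g :: t)).getD i B.bq := by
            intro j1 hj1
            interval_cases j1
            · simp
            · simp only [Nat.add_zero] at e0; rw [← e0]
            · simp only [Nat.add_zero] at e0 e1
              have : i + 1 + 1 = i + 2 := by omega
              rw [this] at e1
              rw [← e1, ← e0]
          obtain ⟨j1, hj1, hr1⟩ : ∃ j1, j1 < 3 ∧ (i + j1) % 3 = γ :=
            ⟨(γ + 3 - i % 3) % 3, by omega, by omega⟩
          obtain ⟨j2, hj2, hr2⟩ : ∃ j2, j2 < 3 ∧ (i + j2) % 3 = δ :=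
            ⟨(δ + 3 - i % 3) % 3, by omega, by omega⟩
          have v1 := hWval (i + j1) (by omega) (by omega) (by omega)
          have v2 := hWval (i + j2) (by omega) (by omega) (by omega)
          have := (chain j1 hj1).trans (chain j2 hj2).symm
          rw [v1, v2, hr1, hr2] at this
          exact pat_ne g γ δ hγ3 hδ3 hγq hδq hγδ this
        · -- p ≥ 2, so 2p ≥ 4 and we can find j < 2p with (i+j) % 3 = γ
          obtain ⟨j, hjlt, hjr⟩ : ∃ j, j < 2 * p ∧ (i + j) % 3 = γ :=
            ⟨(γ + 3 - i % 3) % 3, by omega, by omega⟩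
          have key := hcube j hjlt
          have v1 := hWval (i + j) (by omega) (by omega) (by omega)
          have v2 : (stewT (g :: t)).getD (i + j + p) B.bq
              = (pat g).getD ((i + j + p) % 3) B.bq := by
            rw [hW _ (by omega)]
            exact sig_getD_ne g _ _ (by omega) (by omega)
          have hr2 : (i + j + p) % 3 = δ := by omega
          rw [v1, v2, hjr, hr2] at key
          exact pat_ne g γ δ hγ3 hδ3 hγq hδq hγδ key


/-! ### Stabilization of finite Stewart words to the infinite Stewart word -/

lemma fill_length : ∀ (X u : List B), (fill X u).length = X.length := by
  intro X
  induction X with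
  | nil => intro u; rfl
  | cons x X ih => intro u; cases x <;> cases u <;> simp [fill, ih]

lemma fill_count_zero : ∀ (X : List B), X.count B.bq = 0 → ∀ u, fill X u = X := by
  intro X
  induction X with
  | nil => intros; rfl
  | cons x X ih =>
      intro h u
      cases x <;> cases u <;> simp_all [fill, List.count_cons]

lemma count_sig (g : A) (x : B) :
    (sig g x).count B.bq = if x = B.bq then 1 else 0 := by
  cases g <;> cases x <;> rfl

lemma count_stewT : ∀ t : List A, (stewT t).count B.bq = 1 := by
  intro t
  induction t with
  | nil => rfl
  | cons g t ih =>
      rw [stewT_cons]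
      have key : ∀ (u : List B), (u.flatMap (sig g)).count B.bq = u.count B.bq := by
        intro u
        induction u with
        | nil => rfl
        | cons x u ih2 =>
            rw [List.flatMap_cons, List.count_append, ih2, List.count_cons, count_sig]
            cases x <;> first | (simp; omega) | simp [Nat.add_comm]
      rw [key, ih]

lemma fill_append : ∀ (X Y u : List B),
    fill (X ++ Y) u = fill X u ++ fill Y (u.drop (X.count B.bq)) := by
  intro X
  induction X with
  | nil => intro Y u; simp [fill]
  | cons x X ih =>
      intro Y u
      cases x <;> cases u <;> simp [fill, List.count_cons, ih]

lemma fill_one_getD : ∀ (X : List B), X.count B.bq = 1 → ∀ (c : B) (cs : List B) (n : ℕ),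
    n < X.length →
    (fill X (c :: cs)).getD n B.bq
      = if X.getD n B.bq = B.bq then c else X.getD n B.bq := by
  intro X
  induction X with
  | nil => intro h; simp at h
  | cons x X ih =>
      intro h c cs n hn
      cases x
      case bq =>
        have hX : X.count B.bq = 0 := by
          simp [List.count_cons] at h; omega
        have hfe : fill (B.bq :: X) (c :: cs) = c :: X := by
          show c :: fill X cs = c :: X
          rw [fill_count_zero X hX]
        rw [hfe]
        cases n with
        | zero => simp
        | succ m =>
            have hm : m < X.length := by simpa using hn
            have hne : X.getD m B.bq ≠ B.bq := by
              intro he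
              have hmem : X.getD m B.bq ∈ X := by
                rw [List.getD_eq_getElem _ _ hm]
                exact List.getElem_mem _
              rw [he] at hmem
              exact (List.count_eq_zero.mp hX) hmem
            simp only [List.getD_cons_succ]
            exact (if_neg hne).symm
      case b0 =>
        have hX : X.count B.bq = 1 := by simpa [List.count_cons] using h
        show (B.b0 :: fill X (c :: cs)).getD n B.bq = _
        cases n with
        | zero => simp
        | succ m =>
            simp only [List.getD_cons_succ]
            exact ih hX c cs m (by simpa using hn)
      case b1 =>
        have hX : X.count B.bq = 1 := by simpa [List.count_cons] using h
        show (B.b1 :: fill X (c :: cs)).getD n B.bq = _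
        cases n with
        | zero => simp
        | succ m =>
            simp only [List.getD_cons_succ]
            exact ih hX c cs m (by simpa using hn)

lemma stewT_snoc (s : List A) (g : A) :
    stewT (s ++ [g]) = fill (stewT s ++ stewT s ++ stewT s) (pat g) := by
  have hrev : (s ++ [g]).reverse = g :: s.reverse := by simp
  show Trev ((s ++ [g]).reverse) = _
  rw [hrev, Trev]
  rfl

lemma prefT_succ (t : ℕ → A) (r : ℕ) : prefT t (r + 1) = prefT t r ++ [t r] := by
  rw [prefT, List.ofFn_succ', List.concat_eq_append]
  rfl

lemma prefT_length (t : ℕ → A) (r : ℕ) : (prefT t r).length = r := by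
  simp [prefT]

lemma step_lemma (t : ℕ → A) (r n : ℕ) (hn : n < 3 ^ r) :
    (stewT (prefT t (r + 1))).getD n B.bq =
      if (stewT (prefT t r)).getD n B.bq = B.bq then (pat (t r)).getD 0 B.bq
      else (stewT (prefT t r)).getD n B.bq := by
  have hlen : (stewT (prefT t r)).length = 3 ^ r := by rw [stewT_length, prefT_length]
  have hcnt : (stewT (prefT t r)).count B.bq = 1 := count_stewT _
  rw [prefT_succ, stewT_snoc]
  rw [fill_append]
  rw [List.getD_append _ _ _ _ (by rw [fill_length, List.length_append]; omega)]
  rw [fill_append]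
  rw [List.getD_append _ _ _ _ (by rw [fill_length]; omega)]
  obtain ⟨c, cs, hpat, hc⟩ : ∃ c cs, pat (t r) = c :: cs ∧ c = (pat (t r)).getD 0 B.bq := by
    cases (t r) <;> exact ⟨_, _, rfl, rfl⟩
  rw [hpat]
  rw [fill_one_getD _ hcnt c cs n (by omega)]
  simp

lemma exists_eventual (t : ℕ → A) (n : ℕ) :
    ∃ v : B, ∃ R : ℕ, ∀ r ≥ R, (stewT (prefT t r)).getD n B.bq = v := by
  have hbig : ∀ r : ℕ, n + 1 ≤ r → n < 3 ^ r := by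
    intro r h
    calc n < 3 ^ n := Nat.lt_pow_self (by norm_num)
      _ ≤ 3 ^ r := Nat.pow_le_pow_right (by norm_num) (by omega)
  by_cases h : ∃ r, n + 1 ≤ r ∧ (stewT (prefT t r)).getD n B.bq ≠ B.bq
  · obtain ⟨r1, hr1, hne⟩ := h
    refine ⟨(stewT (prefT t r1)).getD n B.bq, r1, ?_⟩
    intro r hr
    induction r, hr using Nat.le_induction with
    | base => rfl
    | succ r hr ih =>
        have hb : n < 3 ^ r := hbig r (by omega)
        have hner : (stewT (prefT t r)).getD n B.bq ≠ B.bq := by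
          rw [ih]; exact hne
        rw [step_lemma t r n hb, if_neg hner, ih]
  · push_neg at h
    exact ⟨B.bq, n + 1, fun r hr => h r hr⟩

lemma stewInf_spec (t : ℕ → A) (n : ℕ) :
    ∃ R : ℕ, ∀ r ≥ R, (stewT (prefT t r)).getD n B.bq = stewInf t n :=
  Classical.epsilon_spec (exists_eventual t n)

lemma www_period (w : List B) (j : ℕ) (hj : j < 2 * w.length) :
    (w ++ w ++ w).getD j B.bq = (w ++ w ++ w).getD (j + w.length) B.bq := by
  set p := w.length with hp
  rcases Nat.lt_or_ge j p with h | h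
  · rw [List.getD_append _ _ _ _ (by simp [List.length_append]; omega),
      List.getD_append _ _ _ _ h,
      List.getD_append _ _ _ _ (by simp [List.length_append]; omega),
      List.getD_append_right _ _ _ _ (by omega)]
    congr 1
    omega
  · rw [List.getD_append _ _ _ _ (by simp [List.length_append]; omega),
      List.getD_append_right _ _ _ _ h,
      List.getD_append_right _ _ _ _ (by simp [List.length_append]; omega)]
    congr 1
    simp [List.length_append]
    omega

theorem stmt_6 :
    (¬ ∃ (t : List A) (i p : ℕ), 1 ≤ p ∧ i + 3 * p ≤ 3 ^ t.length ∧
        ∀ j < 2 * p, (stewT t).getD (i + j) B.bq = (stewT t).getD (i + j + p) B.bq) ∧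
    (∀ t : ℕ → A, ¬ ∃ w : List B, w ≠ [] ∧ FactorOf (w ++ w ++ w) (stewInf t)) := by
  constructor
  · rintro ⟨t, i, p, hp, hle, hcube⟩
    exact cubefree t i p hp hle hcube
  · rintro t ⟨w, hw, i, hfac⟩
    set p := w.length with hp
    have hp1 : 1 ≤ p := by
      rw [hp]
      exact List.length_pos_iff.mpr hw
    have hlw : (w ++ w ++ w).length = 3 * p := by
      simp [List.length_append, hp]
      omega
    choose R hR using fun n => stewInf_spec t n
    set r := max (i + 3 * p) ((Finset.range (3 * p)).sup fun j => R (i + j)) with hr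
    have hrge : ∀ j, j < 3 * p → R (i + j) ≤ r := by
      intro j hj
      rw [hr]
      exact le_trans (Finset.le_sup (f := fun j => R (i + j)) (Finset.mem_range.mpr hj))
        le_sup_right
    have hlen : i + 3 * p ≤ 3 ^ (prefT t r).length := by
      rw [prefT_length]
      have h1 : i + 3 * p ≤ r := le_max_left _ _
      have h2 : r < 3 ^ r := Nat.lt_pow_self (by norm_num)
      omega
    have hval : ∀ j, j < 3 * p →
        (stewT (prefT t r)).getD (i + j) B.bq = (w ++ w ++ w).getD j B.bq := by
      intro j hj
      rw [hfac j (by omega)]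
      exact hR (i + j) r (hrge j hj)
    apply cubefree (prefT t r) i p hp1 hlen
    intro j hj
    have e1 : i + j + p = i + (j + p) := by omega
    rw [e1, hval j (by omega), hval (j + p) (by omega)]
    exact www_period w j (by omega)
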